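/- Let d₁, d₂, d₃, d₄ be nonnegative real numbers with d₁+d₂+d₃+d₄ = 1 and let ρ_d be the diagonal matrix indexed by (Fin 2 × Fin 2) with diagonal entries d₁, d₂, d₃, d₄ in the order (0,0),(0,1),(1,0),(1,1). For real λ₁, λ₂, λ₃ define U_g(λ₁,λ₂,λ₃) = exp(−i(λ₁ σ₁⊗ₖσ₁ + λ₂ σ₂⊗ₖσ₂ + λ₃ σ₃⊗ₖσ₃)). If for all λ₁, λ₂, λ₃ ∈ ℝ the matrix U_g† ρ_d U_g satisfies the zero-discord block condition, then there exists s ∈ ℝ such that the multiset {d₁, d₂, d₃, d₄} equals {s, s, 1/2 − s, 1/2 − s}. -/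

import Mathlib

open Matrix
open scoped Kronecker

noncomputable def pauli1 : Matrix (Fin 2) (Fin 2) ℂ := !![0, 1; 1, 0]
noncomputable def pauli2 : Matrix (Fin 2) (Fin 2) ℂ := !![0, -Complex.I; Complex.I, 0]
noncomputable def pauli3 : Matrix (Fin 2) (Fin 2) ℂ := !![1, 0; 0, -1]

/-- The Cartan global unitary `U_g(λ₁,λ₂,λ₃) = exp(−i(λ₁σ₁⊗σ₁ + λ₂σ₂⊗σ₂ + λ₃σ₃⊗σ₃))`. -/
noncomputable def cartanUg (l1 l2 l3 : ℝ) :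
    Matrix (Fin 2 × Fin 2) (Fin 2 × Fin 2) ℂ :=
  NormedSpace.exp ((-Complex.I) •
    ((l1 : ℂ) • (pauli1 ⊗ₖ pauli1) + (l2 : ℂ) • (pauli2 ⊗ₖ pauli2) +
      (l3 : ℂ) • (pauli3 ⊗ₖ pauli3)))

def qblock (M : Matrix (Fin 2 × Fin 2) (Fin 2 × Fin 2) ℂ) (a b : Fin 2) :
    Matrix (Fin 2) (Fin 2) ℂ :=
  fun e f => M (a, e) (b, f)

def ZeroDiscordBlockCondition (M : Matrix (Fin 2 × Fin 2) (Fin 2 × Fin 2) ℂ) : Prop :=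
  (∀ a b : Fin 2, qblock M a b * (qblock M a b)ᴴ = (qblock M a b)ᴴ * qblock M a b) ∧
  (∀ a b a' b' : Fin 2, qblock M a b * qblock M a' b' = qblock M a' b' * qblock M a b)

/-! The generators `σₖ ⊗ₖ σₖ` are pairwise commuting involutions, so `U_g` factors into the
rotations `cos λₖ - i sin λₖ σₖ ⊗ₖ σₖ`. For `λ = (π/8, ∓π/8, 0)` the product only mixes
`|00⟩, |11⟩` (resp. `|01⟩, |10⟩`), by the angle `π/4`, so the block `M₀₁` of `U_g† ρ_d U_g` has
the off-diagonal entries `(i/2)(d₄ - d₁)` and `0` (resp. `0` and `(i/2)(d₃ - d₂)`). The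
off-diagonal entries of a normal `2 × 2` matrix have equal moduli, hence `d₁ = d₄`, `d₂ = d₃`,
and the trace condition gives `d₂ = 1/2 - d₁`. -/

theorem NormedSpace.exp_mul_I_smul_of_mul_self_eq_one {A : Type*} [Ring A] [Algebra ℂ A]
    [TopologicalSpace A] [IsTopologicalRing A] [ContinuousSMul ℂ A] [T2Space A]
    {x : A} (hx : x * x = 1) (z : ℂ) :
    NormedSpace.exp ((z * Complex.I) • x) =
      Complex.cos z • 1 + (Complex.sin z * Complex.I) • x := by
  have hpow : ∀ n, x ^ (2 * n) = 1 := fun n => by rw [pow_mul, sq, hx, one_pow]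
  rw [NormedSpace.exp_eq_tsum ℂ]
  refine HasSum.tsum_eq (HasSum.even_add_odd ?_ ?_)
  · convert (Complex.hasSum_cos' z).smul_const (1 : A) using 2 with n
    rw [smul_pow, hpow, smul_smul, inv_mul_eq_div]
  · convert ((Complex.hasSum_sin' z).mul_right Complex.I).smul_const x using 2 with n
    rw [smul_pow, pow_succ x, hpow, one_mul, smul_smul, div_mul_cancel₀ _ Complex.I_ne_zero,
      inv_mul_eq_div]

theorem Matrix.commute_kronecker_self_of_mul_eq_neg {n R : Type*} [Fintype n] [CommRing R]
    {A B : Matrix n n R} (h : A * B = -(B * A)) : Commute (A ⊗ₖ A) (B ⊗ₖ B) := by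
  have hneg : ∀ C : Matrix n n R, (-C) ⊗ₖ (-C) = C ⊗ₖ C := fun C => by ext; simp
  rw [Commute, SemiconjBy, ← mul_kronecker_mul, ← mul_kronecker_mul, h, hneg]

theorem Matrix.normSq_apply_zero_one_eq_of_mul_conjTranspose_comm
    {B : Matrix (Fin 2) (Fin 2) ℂ} (h : B * Bᴴ = Bᴴ * B) :
    Complex.normSq (B 0 1) = Complex.normSq (B 1 0) := by
  have h00 := congrFun₂ h 0 0
  simp only [mul_apply, Fin.sum_univ_two, conjTranspose_apply, Complex.star_def,
    Complex.mul_conj, ← Complex.normSq_eq_conj_mul_self] at h00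
  exact_mod_cast add_left_cancel h00

lemma pauli1_mul_self : pauli1 * pauli1 = 1 := by simp [pauli1, Matrix.one_fin_two]

lemma pauli2_mul_self : pauli2 * pauli2 = 1 := by simp [pauli2, Matrix.one_fin_two]

lemma pauli3_mul_self : pauli3 * pauli3 = 1 := by simp [pauli3, Matrix.one_fin_two]

lemma pauli1_mul_pauli2 : pauli1 * pauli2 = -(pauli2 * pauli1) := by simp [pauli1, pauli2]

lemma pauli1_mul_pauli3 : pauli1 * pauli3 = -(pauli3 * pauli1) := by simp [pauli1, pauli3]

lemma pauli2_mul_pauli3 : pauli2 * pauli3 = -(pauli3 * pauli2) := by simp [pauli2, pauli3]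

lemma exp_neg_I_mul_smul_kronecker_self {n : Type*} [Fintype n] [DecidableEq n]
    {A : Matrix n n ℂ} (h : A * A = 1) (t : ℝ) :
    NormedSpace.exp ((-Complex.I * t) • A ⊗ₖ A) =
      (Real.cos t : ℂ) • 1 - ((Real.sin t : ℂ) * Complex.I) • A ⊗ₖ A := by
  have hAA : A ⊗ₖ A * A ⊗ₖ A = 1 := by rw [← mul_kronecker_mul, h, one_kronecker_one]
  rw [show -Complex.I * t = (-t : ℂ) * Complex.I by ring,
    NormedSpace.exp_mul_I_smul_of_mul_self_eq_one hAA]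
  simp [sub_eq_add_neg]

theorem cartanUg_eq_mul (l1 l2 l3 : ℝ) :
    cartanUg l1 l2 l3 =
      ((Real.cos l1 : ℂ) • 1 - ((Real.sin l1 : ℂ) * Complex.I) • pauli1 ⊗ₖ pauli1) *
      ((Real.cos l2 : ℂ) • 1 - ((Real.sin l2 : ℂ) * Complex.I) • pauli2 ⊗ₖ pauli2) *
      ((Real.cos l3 : ℂ) • 1 - ((Real.sin l3 : ℂ) * Complex.I) • pauli3 ⊗ₖ pauli3) := by
  have h12 := Matrix.commute_kronecker_self_of_mul_eq_neg pauli1_mul_pauli2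
  have h13 := Matrix.commute_kronecker_self_of_mul_eq_neg pauli1_mul_pauli3
  have h23 := Matrix.commute_kronecker_self_of_mul_eq_neg pauli2_mul_pauli3
  rw [cartanUg, smul_add, smul_add, smul_smul, smul_smul, smul_smul,
    Matrix.exp_add_of_commute _ _ (((h13.smul_left _).smul_right _).add_left
      ((h23.smul_left _).smul_right _)),
    Matrix.exp_add_of_commute _ _ ((h12.smul_left _).smul_right _),
    exp_neg_I_mul_smul_kronecker_self pauli1_mul_self,
    exp_neg_I_mul_smul_kronecker_self pauli2_mul_self,
    exp_neg_I_mul_smul_kronecker_self pauli3_mul_self]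

lemma ZeroDiscordBlockCondition.normSq_apply_eq {M : Matrix (Fin 2 × Fin 2) (Fin 2 × Fin 2) ℂ}
    (hM : ZeroDiscordBlockCondition M) (a b : Fin 2) :
    Complex.normSq (M (a, 0) (b, 1)) = Complex.normSq (M (a, 1) (b, 0)) :=
  Matrix.normSq_apply_zero_one_eq_of_mul_conjTranspose_comm (hM.1 a b)

lemma Real.sin_four_mul (θ : ℝ) :
    Real.sin (4 * θ) = 4 * Real.cos θ * Real.sin θ * (Real.cos θ ^ 2 - Real.sin θ ^ 2) := by
  rw [show 4 * θ = 2 * (2 * θ) by ring, Real.sin_two_mul, Real.sin_two_mul, Real.cos_two_mul']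
  ring

section CartanConjDiagonal

variable (θ : ℝ) (δ : Fin 2 × Fin 2 → ℂ)

lemma cartanUg_neg_conj_diagonal_apply_00_11 :
    ((cartanUg θ (-θ) 0)ᴴ * diagonal δ * cartanUg θ (-θ) 0) (0, 0) (1, 1) =
      Complex.I * (Real.sin (4 * θ) / 2 : ℝ) * (δ (1, 1) - δ (0, 0)) := by
  rw [cartanUg_eq_mul, Real.sin_four_mul]
  simp [-Complex.ofReal_cos, -Complex.ofReal_sin, mul_apply, Fintype.sum_prod_type,
    Fin.sum_univ_two, pauli1, pauli2, pauli3, conjTranspose_apply, diagonal_apply, one_apply]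
  linear_combination
    (2 * Real.cos θ * Real.sin θ * (Real.sin θ ^ 2 : ℂ) * (δ (1, 1) - δ (0, 0))) *
      Complex.I_pow_three

lemma cartanUg_neg_conj_diagonal_apply_01_10 :
    ((cartanUg θ (-θ) 0)ᴴ * diagonal δ * cartanUg θ (-θ) 0) (0, 1) (1, 0) = 0 := by
  rw [cartanUg_eq_mul]
  simp [mul_apply, Fintype.sum_prod_type, Fin.sum_univ_two, pauli1, pauli2, pauli3,
    conjTranspose_apply, diagonal_apply, one_apply]
  ring

lemma cartanUg_conj_diagonal_apply_00_11 :
    ((cartanUg θ θ 0)ᴴ * diagonal δ * cartanUg θ θ 0) (0, 0) (1, 1) = 0 := by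
  rw [cartanUg_eq_mul]
  simp [mul_apply, Fintype.sum_prod_type, Fin.sum_univ_two, pauli1, pauli2, pauli3,
    conjTranspose_apply, diagonal_apply, one_apply]
  ring

lemma cartanUg_conj_diagonal_apply_01_10 :
    ((cartanUg θ θ 0)ᴴ * diagonal δ * cartanUg θ θ 0) (0, 1) (1, 0) =
      Complex.I * (Real.sin (4 * θ) / 2 : ℝ) * (δ (1, 0) - δ (0, 1)) := by
  rw [cartanUg_eq_mul, Real.sin_four_mul]
  simp [-Complex.ofReal_cos, -Complex.ofReal_sin, mul_apply, Fintype.sum_prod_type,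
    Fin.sum_univ_two, pauli1, pauli2, pauli3, conjTranspose_apply, diagonal_apply, one_apply]
  linear_combination
    (2 * Real.cos θ * Real.sin θ * (Real.sin θ ^ 2 : ℂ) * (δ (1, 0) - δ (0, 1))) *
      Complex.I_pow_three

end CartanConjDiagonal

theorem necessary_condition_absolute_zero_discord
    (d1 d2 d3 d4 : ℝ)
    (hsum : d1 + d2 + d3 + d4 = 1)
    (ρd : Matrix (Fin 2 × Fin 2) (Fin 2 × Fin 2) ℂ)
    (hρd : ρd = Matrix.diagonal (fun p : Fin 2 × Fin 2 =>
      if p = (0, 0) then (d1 : ℂ) else if p = (0, 1) then (d2 : ℂ)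
      else if p = (1, 0) then (d3 : ℂ) else (d4 : ℂ)))
    (h : ∀ l1 l2 l3 : ℝ,
      ZeroDiscordBlockCondition ((cartanUg l1 l2 l3)ᴴ * ρd * cartanUg l1 l2 l3)) :
    ∃ s : ℝ, ({d1, d2, d3, d4} : Multiset ℝ) = {s, s, 1 / 2 - s, 1 / 2 - s} := by
  have hsin : Real.sin (4 * (Real.pi / 8)) / 2 = 1 / 2 := by
    rw [show 4 * (Real.pi / 8) = Real.pi / 2 by ring, Real.sin_pi_div_two]
  subst hρd
  have hd14 : d4 = d1 := by
    have h01 := (h (Real.pi / 8) (-(Real.pi / 8)) 0).normSq_apply_eq 0 1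
    rw [cartanUg_neg_conj_diagonal_apply_00_11, cartanUg_neg_conj_diagonal_apply_01_10,
      hsin] at h01
    simpa [sub_eq_zero] using h01
  have hd23 : d3 = d2 := by
    have h01 := (h (Real.pi / 8) (Real.pi / 8) 0).normSq_apply_eq 0 1
    rw [cartanUg_conj_diagonal_apply_00_11, cartanUg_conj_diagonal_apply_01_10, hsin] at h01
    simpa [sub_eq_zero] using h01.symm
  refine ⟨d1, ?_⟩
  rw [hd14, hd23, show 1 / 2 - d1 = d2 by linarith]
  simp only [Multiset.insert_eq_cons, ← Multiset.singleton_add]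
  abel
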